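/- Let $X$ be the completion of $C[0,2]$ in the norm $|\|f\|| = \sup_n \frac{1}{n!}\max_{t\in\varphi^{-n}(0)}|f(t)|$. Then the sequential Lorentz seminorm $l(x) = \inf\{\lim_n \|x_n\| : 0 \le x_n \uparrow |x|\}$ on $X$ is not a norm; specifically $l(\mathbb{1}) = 0$. -/

import Mathlib

/-!
The sequence is `xₖ = j Fₖ` with `Fₖ = min 1 ((k + 1) · dist(·, Z))` and `Z = φ⁻⁽ᴺ⁺¹⁾(0)`. Each `Fₖ`
vanishes on the first `N + 1` levels and is bounded by `1`, so `|‖Fₖ‖| ≤ 1/(N+2)!`, which is small.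

That `j Fₖ ↑ j 𝟙` comes from the dynamics of `φ`: on `(0,2)` it is piecewise affine with slopes
`±2`, so by induction every zero of `φⁿ` in `[0,2]` is a limit of zeros of `φⁿ⁺¹` that are not zeros
of `φⁿ`. If `0 ≤ c ≤ j (1 - Fₖ)` for all `k`, approximate `c` by `j h` with `h ≥ 0`. Then
`(h - (1 - Fₖ))⁺` is small, so `h` is small at the points of each level `m` outside `Z` (with
weight `(m+1)!`), hence, by continuity and the accumulation of new zeros, on `Z` as well (with
weight `(N+2)!`). Thus `|‖h‖| ≲ (N+2)! ‖j h - c‖` and `c = 0`.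
-/

/-- The tent map on `[0,1]`. -/
noncomputable def psi0 (t : ℝ) : ℝ := if t ≤ 1 / 2 then 2 * t else 2 - 2 * t

/-- The iterated tent map `ψ : [0,1] → [0,1]`: `ψ 0 = 0` and
`ψ t = 2⁻ⁿ ψ₀(2ⁿ t - 1)` for `t ∈ [2⁻ⁿ, 2⁻ⁿ⁺¹]` (here `n = -⌊log₂ t⌋`). -/
noncomputable def psi (t : ℝ) : ℝ :=
  if t ≤ 0 then 0
  else (2 : ℝ) ^ (⌊Real.logb 2 t⌋) * psi0 ((2 : ℝ) ^ (-⌊Real.logb 2 t⌋) * t - 1)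

/-- The map `φ : [0,2] → [0,2]`, `φ t = ψ t` on `[0,1]` and `φ t = ψ (2 - t)` on
`[1,2]`. -/
noncomputable def phi (t : ℝ) : ℝ := if t ≤ 1 then psi t else psi (2 - t)

/-- The level set `φ⁻⁽ⁿ⁺¹⁾(0)` inside `[0,2]` (indexing so that `Z 0 = φ⁻¹(0)`). -/
def Zlevel (n : ℕ) : Set (Set.Icc (0 : ℝ) 2) :=
  {t : Set.Icc (0 : ℝ) 2 | phi^[n + 1] (t : ℝ) = 0}

/-- The norm `|‖f‖| = sup_{n ≥ 1} (1/n!) max_{t ∈ φ⁻ⁿ(0)} |f t|` on `C[0,2]`. -/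
noncomputable def tnorm (f : C(Set.Icc (0 : ℝ) 2, ℝ)) : ℝ :=
  ⨆ n : ℕ, (((n + 1).factorial : ℝ))⁻¹ *
    sSup ((fun t : Set.Icc (0 : ℝ) 2 => |f t|) '' Zlevel n)

open Filter Topology Set
open scoped Nat

lemma psi0_le_one (s : ℝ) : psi0 s ≤ 1 := by
  unfold psi0; split_ifs <;> linarith

lemma psi0_nonneg {s : ℝ} (h0 : 0 ≤ s) (h1 : s ≤ 1) : 0 ≤ psi0 s := by
  unfold psi0; split_ifs <;> linarith

lemma psi0_eventually_affine_right (s : ℝ) :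
    ∃ σ ≠ (0 : ℝ), ∀ᶠ y in 𝓝[>] s, psi0 y = psi0 s + σ * (y - s) := by
  rcases lt_or_ge s (1 / 2) with hs | hs
  · refine ⟨2, two_ne_zero, ?_⟩
    filter_upwards [nhdsWithin_le_nhds (Iio_mem_nhds hs)] with y (hy : y < 1 / 2)
    rw [psi0, psi0, if_pos hs.le, if_pos hy.le]; ring
  · refine ⟨-2, by norm_num, ?_⟩
    filter_upwards [self_mem_nhdsWithin] with y (hy : s < y)
    rw [psi0, psi0, if_neg (by linarith)]
    split_ifs with h
    · rw [le_antisymm h hs]; ring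
    · ring

lemma psi0_eventually_affine_left (s : ℝ) :
    ∃ σ ≠ (0 : ℝ), ∀ᶠ y in 𝓝[<] s, psi0 y = psi0 s + σ * (y - s) := by
  rcases le_or_gt s (1 / 2) with hs | hs
  · refine ⟨2, two_ne_zero, ?_⟩
    filter_upwards [self_mem_nhdsWithin] with y (hy : y < s)
    rw [psi0, psi0, if_pos hs, if_pos (by linarith)]; ring
  · refine ⟨-2, by norm_num, ?_⟩
    filter_upwards [nhdsWithin_le_nhds (Ioi_mem_nhds hs)] with y (hy : 1 / 2 < y)
    rw [psi0, psi0, if_neg (not_le.2 hs), if_neg (not_le.2 hy)]; ring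

lemma psi_eq_of_mem_Ico {m : ℤ} {t : ℝ} (h : t ∈ Ico ((2 : ℝ) ^ m) (2 ^ (m + 1))) :
    psi t = 2 ^ m * psi0 (t / 2 ^ m - 1) := by
  have ht : 0 < t := (zpow_pos two_pos m).trans_le h.1
  have hlog : ⌊Real.logb 2 t⌋ = m := by
    have h1 := (Int.zpow_le_iff_le_log (b := 2) one_lt_two ht).1 (by exact_mod_cast h.1)
    have h2 := (Int.lt_zpow_iff_log_lt (b := 2) one_lt_two ht).1 (by exact_mod_cast h.2)
    rw [show (2 : ℝ) = ((2 : ℕ) : ℝ) by norm_num, Real.floor_logb_natCast ht.le]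
    omega
  rw [psi, if_neg ht.not_ge, hlog, zpow_neg, div_eq_inv_mul]

lemma psi_two_zpow (m : ℤ) : psi (2 ^ m) = 0 := by
  have hm : (0 : ℝ) < 2 ^ m := zpow_pos two_pos m
  rw [psi_eq_of_mem_Ico ⟨le_rfl, by rw [zpow_add_one₀ two_ne_zero]; linarith⟩, div_self hm.ne']
  simp [psi0]

lemma psi_eq_of_mem_Icc {m : ℤ} {t : ℝ} (h : t ∈ Icc ((2 : ℝ) ^ m) (2 ^ (m + 1))) :
    psi t = 2 ^ m * psi0 (t / 2 ^ m - 1) := by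
  rcases h.2.lt_or_eq with h2 | rfl
  · exact psi_eq_of_mem_Ico ⟨h.1, h2⟩
  · rw [psi_two_zpow, zpow_add_one₀ two_ne_zero, mul_div_cancel_left₀ _ (zpow_pos two_pos m).ne']
    norm_num [psi0]

lemma exists_mem_Ico_two_zpow {t : ℝ} (ht : 0 < t) : ∃ m : ℤ, t ∈ Ico ((2 : ℝ) ^ m) (2 ^ (m + 1)) :=
  ⟨Int.log 2 t, by simpa using Int.zpow_log_le_self (b := 2) one_lt_two ht,
    by simpa using Int.lt_zpow_succ_log_self (b := 2) one_lt_two t⟩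

lemma exists_mem_Ioc_two_zpow {t : ℝ} (ht : 0 < t) : ∃ m : ℤ, t ∈ Ioc ((2 : ℝ) ^ m) (2 ^ (m + 1)) :=
  ⟨Int.clog 2 t - 1, by simpa using Int.zpow_pred_clog_lt_self (b := 2) one_lt_two ht,
    by simpa using Int.self_le_zpow_clog (b := 2) one_lt_two t⟩

lemma psi_of_nonpos {t : ℝ} (ht : t ≤ 0) : psi t = 0 := if_pos ht

lemma psi_nonneg (t : ℝ) : 0 ≤ psi t := by
  rcases le_or_gt t 0 with ht | ht
  · rw [psi_of_nonpos ht]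
  obtain ⟨m, hm⟩ := exists_mem_Ico_two_zpow ht
  have h2m : (0 : ℝ) < 2 ^ m := zpow_pos two_pos m
  rw [psi_eq_of_mem_Ico hm]
  refine mul_nonneg h2m.le (psi0_nonneg ?_ ?_)
  · rw [sub_nonneg, le_div_iff₀ h2m]; linarith [hm.1]
  · rw [sub_le_iff_le_add, div_le_iff₀ h2m]; linarith [hm.2, zpow_add_one₀ (two_ne_zero' ℝ) m]

lemma psi_le_self {t : ℝ} (ht : 0 ≤ t) : psi t ≤ t := by
  rcases ht.eq_or_lt with rfl | ht
  · rw [psi_of_nonpos le_rfl]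
  obtain ⟨m, hm⟩ := exists_mem_Ico_two_zpow ht
  rw [psi_eq_of_mem_Ico hm]
  nlinarith [psi0_le_one (t / 2 ^ m - 1), zpow_pos (two_pos (α := ℝ)) m, hm.1]

lemma psi_eventually_affine_of_block {m : ℤ} {t σ : ℝ} {l : Filter ℝ}
    (ht : t ∈ Icc ((2 : ℝ) ^ m) (2 ^ (m + 1)))
    (hl : ∀ᶠ x in l, x ∈ Icc ((2 : ℝ) ^ m) (2 ^ (m + 1)))
    (h0 : ∀ᶠ x in l,
      psi0 (x / 2 ^ m - 1) = psi0 (t / 2 ^ m - 1) + σ * (x / 2 ^ m - 1 - (t / 2 ^ m - 1))) :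
    ∀ᶠ x in l, psi x = psi t + σ * (x - t) := by
  filter_upwards [hl, h0] with x hx hx0
  rw [psi_eq_of_mem_Icc hx, psi_eq_of_mem_Icc ht, hx0]
  field_simp
  ring

lemma psi_eventually_affine_right {t : ℝ} (ht : 0 < t) :
    ∃ σ ≠ (0 : ℝ), ∀ᶠ x in 𝓝[>] t, psi x = psi t + σ * (x - t) := by
  obtain ⟨m, hm⟩ := exists_mem_Ico_two_zpow ht
  obtain ⟨σ, hσ, h0⟩ := psi0_eventually_affine_right (t / 2 ^ m - 1)
  have hlim : Tendsto (fun x => x / 2 ^ m - 1) (𝓝[>] t) (𝓝[>] (t / 2 ^ m - 1)) :=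
    (by fun_prop : Continuous fun x : ℝ => x / 2 ^ m - 1).continuousWithinAt.tendsto_nhdsWithin
      fun x (hx : t < x) => by simp only [mem_Ioi]; gcongr
  refine ⟨σ, hσ, psi_eventually_affine_of_block (Ico_subset_Icc_self hm) ?_ (hlim.eventually h0)⟩
  filter_upwards [Ioo_mem_nhdsGT hm.2] with x hx
  exact ⟨hm.1.trans hx.1.le, hx.2.le⟩

lemma psi_eventually_affine_left {t : ℝ} (ht : 0 < t) :
    ∃ σ ≠ (0 : ℝ), ∀ᶠ x in 𝓝[<] t, psi x = psi t + σ * (x - t) := by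
  obtain ⟨m, hm⟩ := exists_mem_Ioc_two_zpow ht
  obtain ⟨σ, hσ, h0⟩ := psi0_eventually_affine_left (t / 2 ^ m - 1)
  have hlim : Tendsto (fun x => x / 2 ^ m - 1) (𝓝[<] t) (𝓝[<] (t / 2 ^ m - 1)) :=
    (by fun_prop : Continuous fun x : ℝ => x / 2 ^ m - 1).continuousWithinAt.tendsto_nhdsWithin
      fun x (hx : x < t) => by simp only [mem_Iio]; gcongr
  refine ⟨σ, hσ, psi_eventually_affine_of_block (Ioc_subset_Icc_self hm) ?_ (hlim.eventually h0)⟩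
  filter_upwards [Ioo_mem_nhdsLT hm.1] with x hx
  exact ⟨hx.1.le, hx.2.le.trans hm.2⟩

lemma continuousWithinAt_of_eventually_affine {f : ℝ → ℝ} {s : Set ℝ} {t σ : ℝ}
    (h : ∀ᶠ x in 𝓝[s] t, f x = f t + σ * (x - t)) : ContinuousWithinAt f s t :=
  (by fun_prop : ContinuousWithinAt (fun x => f t + σ * (x - t)) s t).congr_of_eventuallyEq h
    (by simp)

lemma norm_psi_le (x : ℝ) : ‖psi x‖ ≤ ‖x‖ := by
  rcases le_or_gt x 0 with hx | hx
  · simp [psi_of_nonpos hx]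
  · rw [Real.norm_of_nonneg (psi_nonneg x), Real.norm_of_nonneg hx.le]
    exact psi_le_self hx.le

lemma continuous_psi : Continuous psi := by
  refine continuous_iff_continuousAt.2 fun t => ?_
  rcases lt_trichotomy t 0 with ht | rfl | ht
  · refine continuousAt_const.congr (f := fun _ => (0 : ℝ)) ?_
    filter_upwards [Iio_mem_nhds ht] with x hx
    exact (psi_of_nonpos (le_of_lt hx)).symm
  · rw [ContinuousAt, psi_of_nonpos le_rfl]
    exact squeeze_zero_norm' (Eventually.of_forall norm_psi_le) tendsto_norm_zero
  · obtain ⟨_, -, hl⟩ := psi_eventually_affine_left ht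
    obtain ⟨_, -, hr⟩ := psi_eventually_affine_right ht
    exact continuousAt_iff_continuous_left'_right'.2
      ⟨continuousWithinAt_of_eventually_affine hl, continuousWithinAt_of_eventually_affine hr⟩

lemma continuous_phi : Continuous phi :=
  Continuous.if_le continuous_psi (continuous_psi.comp (continuous_sub_left 2)) continuous_id
    continuous_const fun x hx => by norm_num [hx]

lemma phi_two_sub (s : ℝ) : phi (2 - s) = phi s := by
  unfold phi
  split_ifs with h1 h2 h2
  · rw [show s = 1 by linarith]; norm_num
  · rfl
  · rw [sub_sub_cancel]
  · linarith

lemma iterate_phi_two_sub (n : ℕ) (s : ℝ) : phi^[n + 1] (2 - s) = phi^[n + 1] s := by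
  rw [Function.iterate_succ_apply, Function.iterate_succ_apply, phi_two_sub]

lemma phi_nonneg (s : ℝ) : 0 ≤ phi s := by
  unfold phi; split_ifs <;> exact psi_nonneg _

lemma phi_le_one (s : ℝ) : phi s ≤ 1 := by
  wlog hs : s ≤ 1 generalizing s
  · rw [← phi_two_sub]; exact this _ (by linarith)
  rw [phi, if_pos hs]
  rcases le_or_gt s 0 with h0 | h0
  · rw [psi_of_nonpos h0]; norm_num
  · exact (psi_le_self h0.le).trans hs

lemma phi_eventually_affine_right {t : ℝ} (h0 : 0 < t) (h2 : t < 2) :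
    ∃ σ ≠ (0 : ℝ), ∀ᶠ x in 𝓝[>] t, phi x = phi t + σ * (x - t) := by
  rcases lt_or_ge t 1 with h1 | h1
  · obtain ⟨σ, hσ, h⟩ := psi_eventually_affine_right h0
    refine ⟨σ, hσ, ?_⟩
    filter_upwards [h, nhdsWithin_le_nhds (Iio_mem_nhds h1)] with x hx (hx1 : x < 1)
    rw [phi, phi, if_pos hx1.le, if_pos h1.le, hx]
  · obtain ⟨σ, hσ, h⟩ := psi_eventually_affine_left (sub_pos.2 h2)
    have hlim : Tendsto (fun x => 2 - x) (𝓝[>] t) (𝓝[<] (2 - t)) :=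
      (continuous_sub_left 2).continuousWithinAt.tendsto_nhdsWithin
        fun x (hx : t < x) => by simp only [mem_Iio]; linarith
    refine ⟨-σ, neg_ne_zero.2 hσ, ?_⟩
    filter_upwards [hlim.eventually h, self_mem_nhdsWithin] with x hx (htx : t < x)
    rw [← phi_two_sub x, ← phi_two_sub t, phi, phi, if_pos (by linarith), if_pos (by linarith), hx]
    ring

lemma phi_zero : phi 0 = 0 := by
  rw [phi, if_pos zero_le_one, psi_of_nonpos le_rfl]

lemma exists_phi_eq_zero_mem_Ioo {η : ℝ} (hη : 0 < η) : ∃ a ∈ Ioo 0 η, a < 2 ∧ phi a = 0 := by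
  obtain ⟨n, hn⟩ := exists_pow_lt_of_lt_one (lt_min hη one_pos) (by norm_num : (2 : ℝ)⁻¹ < 1)
  have ha : (2 : ℝ)⁻¹ ^ n = 2 ^ (-(n : ℤ)) := by rw [inv_pow, zpow_neg, zpow_natCast]
  rw [ha] at hn
  refine ⟨2 ^ (-(n : ℤ)), ⟨zpow_pos two_pos _, hn.trans_le (min_le_left _ _)⟩, by
    linarith [min_le_right η 1], ?_⟩
  rw [phi, if_pos (hn.trans_le (min_le_right _ _)).le, psi_two_zpow]

def IsNewZero (n : ℕ) (s : ℝ) : Prop := phi^[n + 1] s = 0 ∧ phi^[n] s ≠ 0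

lemma IsNewZero.of_phi {n : ℕ} {s : ℝ} (h : IsNewZero n (phi s)) : IsNewZero (n + 1) s := by
  simpa only [IsNewZero, Function.iterate_succ_apply] using h

def NewZerosAccumulateRight (n : ℕ) : Prop :=
  ∀ t, 0 ≤ t → t < 2 → phi^[n] t = 0 → ∀ η > 0, ∃ s ∈ Ioo t (t + η), IsNewZero n s

lemma NewZerosAccumulateRight.exists_left {n : ℕ} (hR : NewZerosAccumulateRight n) {t : ℝ}
    (h0 : 0 < t) (h2 : t ≤ 2) (hz : phi^[n] t = 0) {η : ℝ} (hη : 0 < η) :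
    ∃ s ∈ Ioo (t - η) t, IsNewZero n s := by
  cases n with
  | zero => exact absurd hz h0.ne'
  | succ n =>
    obtain ⟨s, hs, hsz⟩ :=
      hR (2 - t) (by linarith) (by linarith) (by rwa [iterate_phi_two_sub]) η hη
    refine ⟨2 - s, ⟨by linarith [hs.2], by linarith [hs.1]⟩, ?_⟩
    simpa only [IsNewZero, iterate_phi_two_sub] using hsz

lemma NewZerosAccumulateRight.exists_succ_of_pos {n : ℕ} (hR : NewZerosAccumulateRight n)
    {t : ℝ} (h0 : 0 < t) (h2 : t < 2) (hz : phi^[n + 1] t = 0) {η : ℝ} (hη : 0 < η) :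
    ∃ s ∈ Ioo t (t + η), IsNewZero (n + 1) s := by
  obtain ⟨σ, hσ, h⟩ := phi_eventually_affine_right h0 h2
  obtain ⟨b, hb : t < b, hbt⟩ := mem_nhdsGT_iff_exists_Ioo_subset.1 h
  set u := phi t
  have hu : phi^[n] u = 0 := by rwa [Function.iterate_succ_apply] at hz
  set r := min (b - t) η
  have hr : 0 < r := lt_min (sub_pos.2 hb) hη
  -- `φ` is affine with slope `σ` on `(t, t + r)`, so it suffices to find a new zero of level `n`
  -- in the image `φ '' (t, t + r)`, an interval on one side of `u`
  suffices ∃ u', IsNewZero n u' ∧ (u' - u) / σ ∈ Ioo 0 r by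
    obtain ⟨u', hu', hy⟩ := this
    have hs : t + (u' - u) / σ ∈ Ioo t b :=
      ⟨by linarith [hy.1], by linarith [hy.2, min_le_left (b - t) η]⟩
    have hphi : phi (t + (u' - u) / σ) = u' := by
      rw [hbt hs]; field_simp; ring
    exact ⟨_, ⟨hs.1, by linarith [hy.2, min_le_right (b - t) η]⟩, IsNewZero.of_phi (by rwa [hphi])⟩
  rcases hσ.lt_or_gt with hneg | hpos
  · have hu0 : 0 < u := by
      have h' : phi (t + r / 2) = u + σ * (t + r / 2 - t) :=
        hbt ⟨by linarith, by linarith [min_le_left (b - t) η]⟩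
      nlinarith [phi_nonneg (t + r / 2)]
    obtain ⟨u', hu'I, hu'z⟩ :=
      hR.exists_left hu0 (by linarith [phi_le_one t]) hu (by nlinarith : 0 < -σ * r)
    exact ⟨u', hu'z, div_pos_of_neg_of_neg (by linarith [hu'I.2]) hneg,
      (div_lt_iff_of_neg hneg).2 (by linarith [hu'I.1])⟩
  · obtain ⟨u', hu'I, hu'z⟩ :=
      hR u (phi_nonneg t) (by linarith [phi_le_one t]) hu (σ * r) (by positivity)
    exact ⟨u', hu'z, div_pos (by linarith [hu'I.1]) hpos,
      (div_lt_iff₀ hpos).2 (by linarith [hu'I.2])⟩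

lemma newZerosAccumulateRight (n : ℕ) : NewZerosAccumulateRight n := by
  induction n with
  | zero =>
    rintro t - - (rfl : t = 0) η hη
    obtain ⟨a, ha, -, hpa⟩ := exists_phi_eq_zero_mem_Ioo hη
    exact ⟨a, by simpa using ha, hpa, ha.1.ne'⟩
  | succ n hR =>
    intro t h0 h2 hz η hη
    rcases h0.eq_or_lt with rfl | h0
    · obtain ⟨a, ha, ha2, hpa⟩ := exists_phi_eq_zero_mem_Ioo (half_pos hη)
      have hza : phi^[n + 1] a = 0 := by
        rw [Function.iterate_succ_apply, hpa, Function.iterate_fixed phi_zero]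
      obtain ⟨s, hs, hsz⟩ := hR.exists_succ_of_pos ha.1 ha2 hza (half_pos hη)
      exact ⟨s, ⟨ha.1.trans hs.1, by linarith [hs.2, ha.2]⟩, hsz⟩
    · exact hR.exists_succ_of_pos h0 h2 hz hη

lemma exists_isNewZero_near (n : ℕ) {t : ℝ} (ht : t ∈ Icc (0 : ℝ) 2) (hz : phi^[n] t = 0)
    {η : ℝ} (hη : 0 < η) : ∃ s ∈ Icc (0 : ℝ) 2, |s - t| < η ∧ IsNewZero n s := by
  rcases ht.2.lt_or_eq with h2 | rfl
  · obtain ⟨s, hs, hsz⟩ := newZerosAccumulateRight n t ht.1 h2 hz _ (lt_min hη (sub_pos.2 h2))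
    refine ⟨s, ⟨by linarith [ht.1, hs.1], by linarith [hs.2, min_le_right η (2 - t)]⟩, ?_, hsz⟩
    rw [abs_of_pos (by linarith [hs.1])]; linarith [hs.2, min_le_left η (2 - t)]
  · obtain ⟨s, hs, hsz⟩ :=
      (newZerosAccumulateRight n).exists_left two_pos le_rfl hz (lt_min hη two_pos)
    refine ⟨s, ⟨by linarith [hs.1, min_le_right η 2], hs.2.le⟩, ?_, hsz⟩
    rw [abs_of_neg (by linarith [hs.2])]; linarith [hs.1, min_le_left η 2]

lemma Zlevel_nonempty (n : ℕ) : (Zlevel n).Nonempty :=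
  ⟨⟨0, left_mem_Icc.2 zero_le_two⟩, Function.iterate_fixed phi_zero _⟩

lemma Zlevel_mono {m n : ℕ} (h : m ≤ n) : Zlevel m ⊆ Zlevel n := fun t (ht : _ = 0) => by
  show phi^[n + 1] _ = 0
  rw [show n + 1 = (n - m) + (m + 1) by omega, Function.iterate_add_apply, ht,
    Function.iterate_fixed phi_zero]

lemma isClosed_Zlevel (n : ℕ) : IsClosed (Zlevel n) :=
  isClosed_eq ((continuous_phi.iterate _).comp continuous_subtype_val) continuous_const

lemma Zlevel_subset_closure_diff (N : ℕ) : Zlevel N ⊆ closure (Zlevel (N + 1) \ Zlevel N) := by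
  intro t (ht : _ = 0)
  refine Metric.mem_closure_iff.2 fun η hη => ?_
  obtain ⟨s, hs, hst, hsz⟩ := exists_isNewZero_near (N + 1) t.2 ht hη
  exact ⟨⟨s, hs⟩, hsz, by rw [Subtype.dist_eq, Real.dist_eq, abs_sub_comm]; exact hst⟩

lemma tnorm_nonneg (f : C(Icc (0 : ℝ) 2, ℝ)) : 0 ≤ tnorm f :=
  Real.iSup_nonneg fun _ => mul_nonneg (by positivity)
    (Real.sSup_nonneg (by rintro _ ⟨t, -, rfl⟩; exact abs_nonneg _))

lemma bddAbove_abs_image (f : C(Icc (0 : ℝ) 2, ℝ)) (s : Set (Icc (0 : ℝ) 2)) :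
    BddAbove ((fun t => |f t|) '' s) :=
  ⟨‖f‖, by rintro _ ⟨t, -, rfl⟩; exact f.norm_coe_le_norm t⟩

lemma abs_apply_le_factorial_mul_tnorm (f : C(Icc (0 : ℝ) 2, ℝ)) {n : ℕ} {t : Icc (0 : ℝ) 2}
    (ht : t ∈ Zlevel n) : |f t| ≤ (n + 1)! * tnorm f := by
  have hbdd :
      BddAbove (range fun n : ℕ => ((n + 1)! : ℝ)⁻¹ * sSup ((fun t => |f t|) '' Zlevel n)) := by
    refine ⟨‖f‖, ?_⟩
    rintro _ ⟨n, rfl⟩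
    calc ((n + 1)! : ℝ)⁻¹ * sSup ((fun t => |f t|) '' Zlevel n) ≤ 1 * ‖f‖ :=
          mul_le_mul (inv_le_one_of_one_le₀ (mod_cast (n + 1).factorial_pos))
            (csSup_le ((Zlevel_nonempty n).image _)
              (by rintro _ ⟨t, -, rfl⟩; exact f.norm_coe_le_norm t))
            (Real.sSup_nonneg (by rintro _ ⟨t, -, rfl⟩; exact abs_nonneg _)) zero_le_one
      _ = ‖f‖ := one_mul _
  have hpos : (0 : ℝ) < (n + 1)! := mod_cast (n + 1).factorial_pos
  rw [← inv_mul_le_iff₀ hpos]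
  exact (mul_le_mul_of_nonneg_left (le_csSup (bddAbove_abs_image f _) ⟨t, ht, rfl⟩)
    (inv_nonneg.2 hpos.le)).trans (le_ciSup hbdd n)

lemma tnorm_le_of_forall {f : C(Icc (0 : ℝ) 2, ℝ)} {B : ℝ}
    (h : ∀ n, ∀ t ∈ Zlevel n, |f t| ≤ (n + 1)! * B) : tnorm f ≤ B := by
  refine ciSup_le fun n => ?_
  have hpos : (0 : ℝ) < (n + 1)! := mod_cast (n + 1).factorial_pos
  rw [inv_mul_le_iff₀ hpos]
  exact csSup_le ((Zlevel_nonempty n).image _) (by rintro _ ⟨t, ht, rfl⟩; exact h n t ht)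

section Cutoff

variable {α : Type*} [PseudoMetricSpace α]

noncomputable def cutoff (S : Set α) (k : ℕ) : C(α, ℝ) :=
  ⟨fun x => min 1 ((k + 1) * Metric.infDist x S),
    continuous_const.min (continuous_const.mul (Metric.continuous_infDist_pt S))⟩

lemma cutoff_apply (S : Set α) (k : ℕ) (x : α) :
    cutoff S k x = min 1 ((k + 1) * Metric.infDist x S) := rfl

lemma cutoff_nonneg (S : Set α) (k : ℕ) : 0 ≤ cutoff S k := fun x =>
  le_min zero_le_one (mul_nonneg (by positivity) Metric.infDist_nonneg)

lemma cutoff_le_one (S : Set α) (k : ℕ) : cutoff S k ≤ 1 := fun _ => min_le_left _ _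

lemma monotone_cutoff (S : Set α) : Monotone (cutoff S) := fun k l hkl x =>
  min_le_min le_rfl
    (mul_le_mul_of_nonneg_right (by exact_mod_cast Nat.succ_le_succ hkl) Metric.infDist_nonneg)

lemma cutoff_eq_zero {S : Set α} {x : α} (hx : x ∈ S) (k : ℕ) : cutoff S k x = 0 := by
  simp [cutoff_apply, Metric.infDist_zero_of_mem hx]

lemma exists_cutoff_eq_one {S : Set α} (hS : IsClosed S) (hne : S.Nonempty) {x : α} (hx : x ∉ S) :
    ∃ k, cutoff S k x = 1 := by
  have hd : 0 < Metric.infDist x S := (hS.notMem_iff_infDist_pos hne).1 hx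
  obtain ⟨k, hk⟩ := exists_nat_ge (Metric.infDist x S)⁻¹
  refine ⟨k, min_eq_left ?_⟩
  calc (1 : ℝ) = (Metric.infDist x S)⁻¹ * Metric.infDist x S := (inv_mul_cancel₀ hd.ne').symm
    _ ≤ (k + 1) * Metric.infDist x S := by gcongr; linarith

end Cutoff

lemma tnorm_cutoff_Zlevel_le (N k : ℕ) : tnorm (cutoff (Zlevel N) k) ≤ ((N + 2)! : ℝ)⁻¹ := by
  refine tnorm_le_of_forall fun m t ht => ?_
  rcases le_or_gt m N with hm | hm
  · rw [cutoff_eq_zero (Zlevel_mono hm ht), abs_zero]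
    positivity
  · have hfac : ((N + 2)! : ℝ) ≤ (m + 1)! := mod_cast Nat.factorial_le (by omega)
    rw [abs_of_nonneg (show 0 ≤ cutoff (Zlevel N) k t from cutoff_nonneg _ k t),
      le_mul_inv_iff₀ (by positivity)]
    calc cutoff (Zlevel N) k t * (N + 2)! ≤ 1 * (m + 1)! :=
          mul_le_mul (cutoff_le_one _ k t) hfac (by positivity) zero_le_one
      _ = (m + 1)! := one_mul _

lemma tnorm_le_of_posPart_sub_cutoff_le {N : ℕ} {h : C(Icc (0 : ℝ) 2, ℝ)} (hh : 0 ≤ h) {δ : ℝ}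
    (hδ : ∀ k, tnorm (h - (1 - cutoff (Zlevel N) k))⁺ ≤ δ) : tnorm h ≤ (N + 2)! * δ := by
  have hδ0 : 0 ≤ δ := (tnorm_nonneg _).trans (hδ 0)
  have off : ∀ m, ∀ t ∈ Zlevel m, t ∉ Zlevel N → h t ≤ (m + 1)! * δ := by
    intro m t ht htN
    obtain ⟨k, hk⟩ := exists_cutoff_eq_one (isClosed_Zlevel N) (Zlevel_nonempty N) htN
    calc h t = (h - (1 - cutoff (Zlevel N) k)) t := by simp [hk]
      _ ≤ |(h - (1 - cutoff (Zlevel N) k))⁺ t| := (le_sup_left).trans (le_abs_self _)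
      _ ≤ (m + 1)! * tnorm (h - (1 - cutoff (Zlevel N) k))⁺ :=
          abs_apply_le_factorial_mul_tnorm _ ht
      _ ≤ (m + 1)! * δ := by gcongr; exact hδ k
  -- on `Zlevel N` itself, `h` is bounded by continuity, since new zeros accumulate there
  have on : ∀ t ∈ Zlevel N, h t ≤ (N + 2)! * δ := fun t ht =>
    (isClosed_le h.continuous continuous_const).closure_subset_iff.2
      (fun s hs => off (N + 1) s hs.1 hs.2) (Zlevel_subset_closure_diff N ht)
  refine tnorm_le_of_forall fun m t ht => ?_
  have h1 : (1 : ℝ) ≤ (m + 1)! := mod_cast (m + 1).factorial_pos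
  have h2 : (1 : ℝ) ≤ (N + 2)! := mod_cast (N + 2).factorial_pos
  rw [abs_of_nonneg (show 0 ≤ h t from hh t)]
  by_cases htN : t ∈ Zlevel N
  · exact (on t htN).trans (le_mul_of_one_le_left (by positivity) h1)
  · calc h t ≤ (m + 1)! * δ := off m t ht htN
      _ ≤ (m + 1)! * ((N + 2)! * δ) := by gcongr; exact le_mul_of_one_le_left hδ0 h2

lemma exists_inv_factorial_lt {ε : ℝ} (hε : 0 < ε) : ∃ N : ℕ, ((N + 2)! : ℝ)⁻¹ < ε := by
  obtain ⟨N, hN⟩ := exists_nat_one_div_lt hε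
  refine ⟨N, lt_of_le_of_lt ?_ hN⟩
  rw [one_div]
  gcongr
  exact_mod_cast (Nat.le_succ _).trans (Nat.self_le_factorial (N + 2))

section LatticeMap

variable {E X : Type*} [Lattice E] [AddCommGroup E] [IsOrderedAddMonoid E] [Module ℝ E]
  [Lattice X] [AddCommGroup X] [IsOrderedAddMonoid X] [Module ℝ X]
  {T : E →ₗ[ℝ] X}

lemma LinearMap.map_sup_of_map_abs (hT : ∀ f, T |f| = |T f|) (f g : E) :
    T (f ⊔ g) = T f ⊔ T g := by
  rw [sup_eq_half_smul_add_add_abs_sub' ℝ, sup_eq_half_smul_add_add_abs_sub' ℝ, map_smul, map_add,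
    map_add, hT, map_sub]

lemma LinearMap.monotone_of_map_abs (hT : ∀ f, T |f| = |T f|) : Monotone T := fun f g hfg => by
  rw [← sup_eq_right, ← T.map_sup_of_map_abs hT, sup_eq_right.2 hfg]

lemma LinearMap.map_posPart_of_map_abs (hT : ∀ f, T |f| = |T f|) (f : E) : T f⁺ = (T f)⁺ := by
  rw [posPart_def, posPart_def, T.map_sup_of_map_abs hT, map_zero]

end LatticeMap

lemma isLUB_range_of_forall_le_sub {ι X : Type*} [Lattice X] [AddCommGroup X]
    [IsOrderedAddMonoid X] {x : ι → X} {y : X} (hle : ∀ k, x k ≤ y)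
    (h : ∀ c, 0 ≤ c → (∀ k, c ≤ y - x k) → c = 0) : IsLUB (range x) y := by
  refine ⟨forall_mem_range.2 hle, fun b hb => ?_⟩
  have := h (y - b)⁺ (posPart_nonneg _) fun k =>
    sup_le (sub_le_sub_left (hb ⟨k, rfl⟩) y) (sub_nonneg.2 (hle k))
  exact sub_nonpos.1 (posPart_eq_zero.1 this)

lemma eq_zero_of_le_of_denseRange {E X : Type*} [Lattice E] [AddCommGroup E] [IsOrderedAddMonoid E]
    [Module ℝ E] [NormedAddCommGroup X] [Lattice X] [HasSolidNorm X] [IsOrderedAddMonoid X]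
    [NormedSpace ℝ X] {T : E →ₗ[ℝ] X} (hT : ∀ f, T |f| = |T f|) (hdense : DenseRange T)
    {G : ℕ → E} {K : ℝ} (hG : ∀ h, 0 ≤ h → ∀ δ, (∀ k, ‖T (h - G k)⁺‖ ≤ δ) → ‖T h‖ ≤ K * δ)
    {c : X} (hc0 : 0 ≤ c) (hcG : ∀ k, c ≤ T (G k)) : c = 0 := by
  have hbound : ∀ δ > 0, ‖c‖ ≤ (1 + K) * δ := by
    intro δ hδ
    obtain ⟨g, hg⟩ := hdense.exists_dist_lt c hδ
    have hgc : ‖T g⁺ - c‖ ≤ δ := by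
      rw [T.map_posPart_of_map_abs hT, ← posPart_eq_self.2 hc0]
      rw [dist_comm, dist_eq_norm] at hg
      exact (norm_sup_sub_sup_le_norm _ _ _).trans hg.le
    have hsmall : ∀ k, ‖T (g⁺ - G k)⁺‖ ≤ δ := fun k => calc
      ‖T (g⁺ - G k)⁺‖ = ‖(T g⁺ - T (G k))⁺‖ := by rw [T.map_posPart_of_map_abs hT, map_sub]
      _ ≤ ‖(T g⁺ - c)⁺‖ := norm_le_norm_of_abs_le_abs (by
          rw [abs_of_nonneg (posPart_nonneg _), abs_of_nonneg (posPart_nonneg _)]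
          exact posPart_mono (sub_le_sub_left (hcG k) _))
      _ ≤ ‖T g⁺ - c‖ := by
          have := norm_sup_sub_sup_le_norm (T g⁺ - c) 0 0
          rwa [sup_idem, sub_zero, sub_zero] at this
      _ ≤ δ := hgc
    calc ‖c‖ ≤ ‖c - T g⁺‖ + ‖T g⁺‖ := norm_le_norm_sub_add _ _
      _ ≤ δ + K * δ := by
          rw [norm_sub_rev]
          exact add_le_add hgc (hG _ (posPart_nonneg g) δ hsmall)
      _ = (1 + K) * δ := by ring
  have hlim : Tendsto (fun δ => (1 + K) * δ) (𝓝[>] 0) (𝓝 0) := by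
    simpa using ((continuous_const_mul (1 + K)).tendsto 0).mono_left nhdsWithin_le_nhds
  exact norm_le_zero_iff.1 (ge_of_tendsto hlim (eventually_mem_nhdsWithin.mono hbound))

theorem stmt15_general {X : Type*} [NormedAddCommGroup X] [Lattice X] [HasSolidNorm X]
    [IsOrderedAddMonoid X] [NormedSpace ℝ X]
    (j : C(Set.Icc (0 : ℝ) 2, ℝ) →ₗ[ℝ] X)
    (hjiso : ∀ f, ‖j f‖ = tnorm f)
    (hjlat : ∀ f, j |f| = |j f|)
    (hjdense : DenseRange j) :
    ∀ ε : ℝ, 0 < ε →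
      ∃ xs : ℕ → X, (∀ n, 0 ≤ xs n) ∧ Monotone xs ∧
        IsLUB (Set.range xs) |j 1| ∧ ∀ n, ‖xs n‖ < ε := by
  intro ε hε
  obtain ⟨N, hN⟩ := exists_inv_factorial_lt hε
  have hj := j.monotone_of_map_abs hjlat
  have hj1 : |j 1| = j 1 := by rw [← hjlat, abs_of_nonneg zero_le_one]
  refine ⟨fun k => j (cutoff (Zlevel N) k), fun k => map_zero j ▸ hj (cutoff_nonneg _ k),
    hj.comp (monotone_cutoff _), ?_,
    fun k => (hjiso _).trans_lt ((tnorm_cutoff_Zlevel_le N k).trans_lt hN)⟩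
  rw [hj1]
  refine isLUB_range_of_forall_le_sub (fun k => hj (cutoff_le_one _ k)) fun c hc0 hc => ?_
  refine eq_zero_of_le_of_denseRange hjlat hjdense (G := fun k => 1 - cutoff (Zlevel N) k)
    (K := (N + 2)!) (fun h hh δ hδ => ?_) hc0 fun k => by simpa only [map_sub] using hc k
  rw [hjiso]
  exact tnorm_le_of_posPart_sub_cutoff_le hh fun k => (hjiso _).symm.trans_le (hδ k)

/-- On the completion `X` of `C[0,2]` in the norm `|‖·‖|` (presented abstractly
via a dense lattice-isometric embedding `j`), the sequential Lorentz seminorm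
`l(x) = inf { lim ‖xₙ‖ : 0 ≤ xₙ ↑ |x| }` is not a norm: `l(𝟙) = 0`, i.e. for
every `ε > 0` there is a nonnegative increasing sequence with supremum
`|j 𝟙| = j 𝟙` all of whose norms are `< ε`. -/
theorem stmt15 {X : Type*} [NormedAddCommGroup X] [Lattice X] [HasSolidNorm X]
    [IsOrderedAddMonoid X] [NormedSpace ℝ X]
    [CompleteSpace X]
    (j : C(Set.Icc (0 : ℝ) 2, ℝ) →ₗ[ℝ] X)
    (hjiso : ∀ f, ‖j f‖ = tnorm f)
    (hjlat : ∀ f, j |f| = |j f|)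
    (hjdense : DenseRange j) :
    ∀ ε : ℝ, 0 < ε →
      ∃ xs : ℕ → X, (∀ n, 0 ≤ xs n) ∧ Monotone xs ∧
        IsLUB (Set.range xs) |j 1| ∧ ∀ n, ‖xs n‖ < ε :=
  stmt15_general j hjiso hjlat hjdense
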